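/- arXiv:2504.19699 — 4 statements merged into one kernel-verified Lean document; each statement's English description precedes it below -/
import Mathlib

section
/- Let z = (x, b, p, dns) be a feasible solution of the full-scale VPP investment model, and let ẑ(z) = (x̂, b̂, p̂, d̂) be its aggregation with respect to a cluster assignment c : T → K. Then ẑ(z) is a feasible solution of the aggregated model and the objective values coincide: Ĵ(ẑ(z)) = J(z). -/
open Finset

/-- Feasibility for the full-scale VPP investment model:
(i) power balance, (ii) generation limits, (iii) binary investment limits. -/
def FullFeasible {G T : Type*} [Fintype G] [Fintype T]
    (Δ : ℝ) (F : G → T → ℝ) (D : T → ℝ) (Xlo Xhi : G → ℝ)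
    (x b : G → ℝ) (p : G → T → ℝ) (dns : T → ℝ) : Prop :=
  (∀ t, (∑ g, p g t) * Δ + dns t = D t) ∧
  (∀ g t, 0 ≤ p g t ∧ p g t ≤ F g t * x g) ∧
  (∀ g, (b g = 0 ∨ b g = 1) ∧ b g * Xlo g ≤ x g ∧ x g ≤ b g * Xhi g)

/-- The full-scale objective `J`. -/
def Jfull {G T : Type*} [Fintype G] [Fintype T]
    (Δ : ℝ) (Cinv Cop : G → ℝ) (Cns : ℝ)
    (x : G → ℝ) (p : G → T → ℝ) (dns : T → ℝ) : ℝ :=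
  ∑ g, Cinv g * x g + ∑ t, ((∑ g, Cop g * p g t) * Δ + Cns * dns t)

/-- Feasibility for the aggregated model over clusters `Tk k ⊆ T`. -/
def AggFeasible {G T K : Type*} [Fintype G] [Fintype K]
    (Δ : ℝ) (F : G → T → ℝ) (D : T → ℝ) (Xlo Xhi : G → ℝ)
    (Tk : K → Finset T)
    (xA bA : G → ℝ) (pA : G → K → ℝ) (dA : K → ℝ) : Prop :=
  (∀ k, (∑ g, pA g k) * Δ + dA k = (1 / ((Tk k).card : ℝ)) * ∑ t ∈ Tk k, D t) ∧
  (∀ g k, 0 ≤ pA g k ∧ pA g k ≤ (xA g / ((Tk k).card : ℝ)) * ∑ t ∈ Tk k, F g t) ∧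
  (∀ g, (bA g = 0 ∨ bA g = 1) ∧ bA g * Xlo g ≤ xA g ∧ xA g ≤ bA g * Xhi g)

/-- The aggregated objective `Ĵ`. -/
def Jagg {G T K : Type*} [Fintype G] [Fintype K]
    (Δ : ℝ) (Cinv Cop : G → ℝ) (Cns : ℝ) (Tk : K → Finset T)
    (xA : G → ℝ) (pA : G → K → ℝ) (dA : K → ℝ) : ℝ :=
  ∑ g, Cinv g * xA g +
    ∑ k, ((Tk k).card : ℝ) * ((∑ g, Cop g * pA g k) * Δ + Cns * dA k)

/-- **Proposition 1.** If `z = (x, b, p, dns)` is feasible for the full-scale model,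
then its aggregation `ẑ(z) = (xA, bA, pA, dA)` with respect to the cluster assignment `c`
is feasible for the aggregated model and `Ĵ(ẑ(z)) = J(z)`. -/
theorem aggregation_feasible_and_objective_preserved
    {G T K : Type*} [Fintype G] [Fintype T] [Fintype K] [DecidableEq K]
    [Nonempty G] [Nonempty T] [Nonempty K]
    (c : T → K) (hc : Function.Surjective c)
    (Tk : K → Finset T) (hTk : ∀ k, Tk k = Finset.univ.filter fun t => c t = k)
    (Δ : ℝ) (hΔ : 0 < Δ)
    (Cinv Cop : G → ℝ) (Cns : ℝ)
    (F : G → T → ℝ) (D : T → ℝ) (Xlo Xhi : G → ℝ)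
    (x b : G → ℝ) (p : G → T → ℝ) (dns : T → ℝ)
    (hz : FullFeasible Δ F D Xlo Xhi x b p dns)
    (xA bA : G → ℝ) (pA : G → K → ℝ) (dA : K → ℝ)
    (hxA : ∀ g, xA g = x g) (hbA : ∀ g, bA g = b g)
    (hpA : ∀ g k, pA g k = (1 / ((Tk k).card : ℝ)) * ∑ t ∈ Tk k, p g t)
    (hdA : ∀ k, dA k = (1 / ((Tk k).card : ℝ)) * ∑ t ∈ Tk k, dns t) :
    AggFeasible Δ F D Xlo Xhi Tk xA bA pA dA ∧
      Jagg Δ Cinv Cop Cns Tk xA pA dA = Jfull Δ Cinv Cop Cns x p dns := by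
  obtain ⟨hbal, hlim, hbin⟩ := hz
  have hpos : ∀ k : K, 0 < ((Tk k).card : ℝ) := by
    intro k
    obtain ⟨t, ht⟩ := hc k
    have htm : t ∈ Tk k := by simp [hTk k, ht]
    exact_mod_cast Finset.card_pos.2 ⟨t, htm⟩
  have hne : ∀ k : K, ((Tk k).card : ℝ) ≠ 0 := fun k => (hpos k).ne'
  refine ⟨⟨?_, ?_, ?_⟩, ?_⟩
  · intro k
    have hD : ∑ t ∈ Tk k, D t = (∑ t ∈ Tk k, ∑ g, p g t) * Δ + ∑ t ∈ Tk k, dns t := by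
      rw [Finset.sum_mul, ← Finset.sum_add_distrib]
      exact (Finset.sum_congr rfl fun t _ => (hbal t).symm)
    simp only [hpA, hdA]
    rw [← Finset.mul_sum, Finset.sum_comm, hD]
    ring
  · intro g k
    constructor
    · rw [hpA]
      have h0 : (0:ℝ) ≤ ∑ t ∈ Tk k, p g t :=
        Finset.sum_nonneg fun t _ => (hlim g t).1
      positivity
    · rw [hpA, hxA]
      have h1 : ∑ t ∈ Tk k, p g t ≤ ∑ t ∈ Tk k, F g t * x g :=
        Finset.sum_le_sum fun t _ => (hlim g t).2
      have h2 : (1 / ((Tk k).card : ℝ)) * ∑ t ∈ Tk k, p g t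
          ≤ (1 / ((Tk k).card : ℝ)) * ∑ t ∈ Tk k, F g t * x g :=
        mul_le_mul_of_nonneg_left h1 (by positivity)
      refine h2.trans_eq ?_
      rw [← Finset.sum_mul]
      ring
  · intro g
    rw [hxA, hbA]
    exact hbin g
  · have key : ∀ k, ((Tk k).card : ℝ) * ((∑ g, Cop g * pA g k) * Δ + Cns * dA k)
        = ∑ t ∈ Tk k, ((∑ g, Cop g * p g t) * Δ + Cns * dns t) := by
      intro k
      have h1 : ∑ g, Cop g * pA g k
          = (1 / ((Tk k).card : ℝ)) * ∑ g, ∑ t ∈ Tk k, Cop g * p g t := by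
        rw [Finset.mul_sum]
        refine Finset.sum_congr rfl fun g _ => ?_
        simp only [hpA, Finset.mul_sum]
        exact Finset.sum_congr rfl fun t _ => by ring
      have harr : ∀ X Y : ℝ, ((Tk k).card : ℝ) *
          ((1 / ((Tk k).card : ℝ) * X) * Δ + Cns * (1 / ((Tk k).card : ℝ) * Y))
          = X * Δ + Cns * Y := by
        intro X Y
        have h : ((Tk k).card : ℝ) * (1 / ((Tk k).card : ℝ)) = 1 := by
          rw [mul_one_div, div_self (hne k)]
        linear_combination (X * Δ + Cns * Y) * h
      rw [h1, hdA, Finset.sum_add_distrib, ← Finset.sum_mul, ← Finset.mul_sum,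
        Finset.sum_comm]
      exact harr _ _
    unfold Jagg Jfull
    congr 1
    · exact Finset.sum_congr rfl fun g _ => by rw [hxA]
    · rw [Finset.sum_congr rfl fun k _ => key k]
      have := Finset.sum_fiberwise_of_maps_to
        (g := c) (s := (Finset.univ : Finset T)) (t := (Finset.univ : Finset K))
        (fun t _ => Finset.mem_univ (c t))
        (fun t => (∑ g, Cop g * p g t) * Δ + Cns * dns t)
      rw [← this]
      exact Finset.sum_congr rfl fun k _ => by rw [hTk k]
end

section
/- Let z = (x, b, p, dns) be any full-scale solution (not necessarily feasible) and let ẑ(z) = (x̂, b̂, p̂, d̂) be its aggregation with respect to a cluster assignment c : T → K. Then the aggregated objective evaluated at ẑ(z) equals the full-scale objective evaluated at z: Ĵ(ẑ(z)) = J(z). -/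
open Finset

/-- For any full-scale solution `z = (x, b, p, dns)` (not necessarily feasible),
the aggregated objective evaluated at the aggregation `ẑ(z)` equals the
full-scale objective evaluated at `z`: `Ĵ(ẑ(z)) = J(z)`. -/
theorem aggregated_objective_eq_full_objective
    {G T K : Type*} [Fintype G] [Fintype T] [Fintype K] [DecidableEq K]
    [Nonempty G] [Nonempty T] [Nonempty K]
    (c : T → K) (hc : Function.Surjective c)
    (Tk : K → Finset T) (hTk : ∀ k, Tk k = Finset.univ.filter fun t => c t = k)
    (Δ : ℝ) (hΔ : 0 < Δ)
    (Cinv Cop : G → ℝ) (Cns : ℝ)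
    (F : G → T → ℝ) (D : T → ℝ) (Xlo Xhi : G → ℝ)
    (x b : G → ℝ) (p : G → T → ℝ) (dns : T → ℝ)
    (xA bA : G → ℝ) (pA : G → K → ℝ) (dA : K → ℝ)
    (hxA : ∀ g, xA g = x g) (hbA : ∀ g, bA g = b g)
    (hpA : ∀ g k, pA g k = (1 / ((Tk k).card : ℝ)) * ∑ t ∈ Tk k, p g t)
    (hdA : ∀ k, dA k = (1 / ((Tk k).card : ℝ)) * ∑ t ∈ Tk k, dns t) :
    Jagg Δ Cinv Cop Cns Tk xA pA dA = Jfull Δ Cinv Cop Cns x p dns := by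
  have hcard : ∀ k, ((Tk k).card : ℝ) ≠ 0 := by
    intro k
    obtain ⟨t, ht⟩ := hc k
    have : t ∈ Tk k := by simp [hTk, ht]
    have := Finset.card_pos.mpr ⟨t, this⟩
    positivity
  have hterm : ∀ k, ((Tk k).card : ℝ) * ((∑ g, Cop g * pA g k) * Δ + Cns * dA k)
      = ∑ t ∈ Tk k, ((∑ g, Cop g * p g t) * Δ + Cns * dns t) := by
    intro k
    have h1 : ∑ t ∈ Tk k, ((∑ g, Cop g * p g t) * Δ + Cns * dns t)
        = (∑ g, Cop g * ∑ t ∈ Tk k, p g t) * Δ + Cns * ∑ t ∈ Tk k, dns t := by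
      rw [Finset.sum_add_distrib, ← Finset.mul_sum, ← Finset.sum_mul]
      congr 1
      rw [Finset.sum_comm]
      simp [Finset.mul_sum]
    rw [h1]
    simp only [hpA, hdA]
    rw [show (∑ g, Cop g * (1 / ((Tk k).card : ℝ) * ∑ t ∈ Tk k, p g t))
        = 1 / ((Tk k).card : ℝ) * ∑ g, Cop g * ∑ t ∈ Tk k, p g t by
      rw [Finset.mul_sum]; apply Finset.sum_congr rfl; intro g _; ring]
    have hn : ((Tk k).card : ℝ) * (1 / ((Tk k).card : ℝ)) = 1 := by
      rw [mul_one_div, div_self (hcard k)]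
    calc ((Tk k).card : ℝ) * ((1 / ((Tk k).card : ℝ) * ∑ g, Cop g * ∑ t ∈ Tk k, p g t) * Δ
            + Cns * (1 / ((Tk k).card : ℝ) * ∑ t ∈ Tk k, dns t))
        = (((Tk k).card : ℝ) * (1 / ((Tk k).card : ℝ))) *
            ((∑ g, Cop g * ∑ t ∈ Tk k, p g t) * Δ + Cns * ∑ t ∈ Tk k, dns t) := by ring
      _ = (∑ g, Cop g * ∑ t ∈ Tk k, p g t) * Δ + Cns * ∑ t ∈ Tk k, dns t := by
            rw [hn, one_mul]
  unfold Jagg Jfull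
  rw [Finset.sum_congr rfl (fun k _ => hterm k)]
  congr 1
  · exact Finset.sum_congr rfl fun g _ => by rw [hxA]
  · rw [show (fun k => ∑ t ∈ Tk k, ((∑ g, Cop g * p g t) * Δ + Cns * dns t))
        = fun k => ∑ t ∈ Finset.univ.filter (fun t => c t = k),
            ((∑ g, Cop g * p g t) * Δ + Cns * dns t) from funext fun k => by rw [hTk]]
    exact Finset.sum_fiberwise _ _ _
end

section
/- Suppose ẑ* is an optimal solution of the aggregated model, i.e., ẑ* is feasible for the aggregated model and Ĵ(ẑ*) ≤ Ĵ(ẑ) for every aggregated-feasible ẑ. Then for every feasible solution z of the full-scale model, Ĵ(ẑ*) ≤ J(z). In particular, the optimal objective value of the aggregated model is a lower bound on the optimal objective value of the full-scale model. -/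
open Finset

/-- If `ẑ*` is optimal for the aggregated model, then for every feasible solution
`z` of the full-scale model one has `Ĵ(ẑ*) ≤ J(z)`; in particular the aggregated
optimal value is a lower bound on the full-scale optimal value. -/
theorem aggregated_optimum_lower_bounds_full_scale
    {G T K : Type*} [Fintype G] [Fintype T] [Fintype K] [DecidableEq K]
    [Nonempty G] [Nonempty T] [Nonempty K]
    (c : T → K) (hc : Function.Surjective c)
    (Tk : K → Finset T) (hTk : ∀ k, Tk k = Finset.univ.filter fun t => c t = k)
    (Δ : ℝ) (hΔ : 0 < Δ)
    (Cinv Cop : G → ℝ) (Cns : ℝ)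
    (F : G → T → ℝ) (D : T → ℝ) (Xlo Xhi : G → ℝ)
    (xAs bAs : G → ℝ) (pAs : G → K → ℝ) (dAs : K → ℝ)
    (hfeas : AggFeasible Δ F D Xlo Xhi Tk xAs bAs pAs dAs)
    (hopt : ∀ (xA bA : G → ℝ) (pA : G → K → ℝ) (dA : K → ℝ),
      AggFeasible Δ F D Xlo Xhi Tk xA bA pA dA →
        Jagg Δ Cinv Cop Cns Tk xAs pAs dAs ≤ Jagg Δ Cinv Cop Cns Tk xA pA dA) :
    ∀ (x b : G → ℝ) (p : G → T → ℝ) (dns : T → ℝ),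
      FullFeasible Δ F D Xlo Xhi x b p dns →
        Jagg Δ Cinv Cop Cns Tk xAs pAs dAs ≤ Jfull Δ Cinv Cop Cns x p dns := by
  intro x b p dns hz
  obtain ⟨hz1, hz2, hz3⟩ := hz
  have hcard : ∀ k : K, 0 < ((Tk k).card : ℝ) := by
    intro k
    obtain ⟨t, ht⟩ := hc k
    have : t ∈ Tk k := by rw [hTk k]; simp [ht]
    exact_mod_cast Finset.card_pos.mpr ⟨t, this⟩
  set pA : G → K → ℝ := fun g k => (1 / ((Tk k).card : ℝ)) * ∑ t ∈ Tk k, p g t with hpA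
  set dA : K → ℝ := fun k => (1 / ((Tk k).card : ℝ)) * ∑ t ∈ Tk k, dns t with hdA
  -- helper: swap sums with coefficient
  have hswap : ∀ (k : K) (w : G → ℝ),
      ∑ g, w g * ((1 / ((Tk k).card : ℝ)) * ∑ t ∈ Tk k, p g t)
        = (1 / ((Tk k).card : ℝ)) * ∑ t ∈ Tk k, ∑ g, w g * p g t := by
    intro k w
    calc ∑ g, w g * ((1 / ((Tk k).card : ℝ)) * ∑ t ∈ Tk k, p g t)
        = ∑ g, ∑ t ∈ Tk k, (1 / ((Tk k).card : ℝ)) * (w g * p g t) := by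
          refine Finset.sum_congr rfl fun g _ => ?_
          rw [Finset.mul_sum, Finset.mul_sum]
          exact Finset.sum_congr rfl fun t _ => by ring
      _ = ∑ t ∈ Tk k, ∑ g, (1 / ((Tk k).card : ℝ)) * (w g * p g t) :=
          Finset.sum_comm
      _ = (1 / ((Tk k).card : ℝ)) * ∑ t ∈ Tk k, ∑ g, w g * p g t := by
          rw [Finset.mul_sum]
          exact Finset.sum_congr rfl fun t _ => (Finset.mul_sum _ _ _).symm
  have hfeasA : AggFeasible Δ F D Xlo Xhi Tk x b pA dA := by
    refine ⟨?_, ?_, hz3⟩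
    · intro k
      have h1 : ∑ g, pA g k
          = (1 / ((Tk k).card : ℝ)) * ∑ t ∈ Tk k, ∑ g, p g t := by
        have h := hswap k (fun _ => 1)
        simp only [one_mul] at h
        simpa [hpA] using h
      have hD : ∑ t ∈ Tk k, D t
          = ∑ t ∈ Tk k, ((∑ g, p g t) * Δ + dns t) :=
        Finset.sum_congr rfl fun t _ => (hz1 t).symm
      rw [h1, hD, Finset.sum_add_distrib, ← Finset.sum_mul]
      simp only [hdA]
      ring
    · intro g k
      have hn := hcard k
      constructor
      · exact mul_nonneg (by positivity) (Finset.sum_nonneg fun t _ => (hz2 g t).1)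
      · have hle : ∑ t ∈ Tk k, p g t ≤ x g * ∑ t ∈ Tk k, F g t := by
          rw [Finset.mul_sum]
          refine Finset.sum_le_sum fun t _ => ?_
          rw [mul_comm]; exact (hz2 g t).2
        calc pA g k = (1 / ((Tk k).card : ℝ)) * ∑ t ∈ Tk k, p g t := rfl
          _ ≤ (1 / ((Tk k).card : ℝ)) * (x g * ∑ t ∈ Tk k, F g t) :=
              mul_le_mul_of_nonneg_left hle (by positivity)
          _ = (x g / ((Tk k).card : ℝ)) * ∑ t ∈ Tk k, F g t := by ring
  have hJ : Jagg Δ Cinv Cop Cns Tk x pA dA = Jfull Δ Cinv Cop Cns x p dns := by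
    unfold Jagg Jfull
    congr 1
    have hpart : ∀ f : T → ℝ, ∑ t, f t = ∑ k, ∑ t ∈ Tk k, f t := by
      intro f
      rw [show (fun k => ∑ t ∈ Tk k, f t)
            = fun k => ∑ t ∈ Finset.univ.filter (fun t => c t = k), f t
          from funext fun k => by rw [hTk k]]
      exact (Finset.sum_fiberwise Finset.univ c f).symm
    rw [hpart (fun t => (∑ g, Cop g * p g t) * Δ + Cns * dns t)]
    refine Finset.sum_congr rfl fun k _ => ?_
    have hn := (hcard k).ne'
    rw [show ∑ g, Cop g * pA g k
          = (1 / ((Tk k).card : ℝ)) * ∑ t ∈ Tk k, ∑ g, Cop g * p g t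
        from hswap k Cop]
    simp only [hdA]
    rw [Finset.sum_add_distrib, ← Finset.sum_mul, ← Finset.mul_sum]
    field_simp
  calc Jagg Δ Cinv Cop Cns Tk xAs pAs dAs ≤ Jagg Δ Cinv Cop Cns Tk x pA dA :=
        hopt x b pA dA hfeasA
    _ = Jfull Δ Cinv Cop Cns x p dns := hJ
end

section
/- Let ẑ* = (x̂*, b̂*, p̂*, d̂*) be an optimal solution of the aggregated model, and let z' = (x̂*, b̂*, p', dns') be any feasible solution of the full-scale model whose investment variables are fixed to x̂* and b̂* (as produced by the operational optimization step of the algorithm). Then, for a full-scale optimum z*, Ĵ(ẑ*) ≤ J(z*) ≤ J(z') holds, where J(z*) denotes the optimal objective value of the full-scale model; consequently the optimality gap ε = (J(z') − Ĵ(ẑ*))/J(z') is nonnegative whenever J(z') > 0. -/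
open Finset

/-- **Sandwich bound.** Let `ẑ* = (xAs, bAs, pAs, dAs)` be optimal for the
aggregated model, let `z' = (xAs, bAs, p', dns')` be any feasible full-scale
solution with investment variables fixed to `xAs, bAs` (as produced by the
operational step of the algorithm), and let `z*` be optimal for the full-scale
model. Then `Ĵ(ẑ*) ≤ J(z*) ≤ J(z')`, and hence the optimality gap
`ε = (J(z') − Ĵ(ẑ*))/J(z')` is nonnegative whenever `J(z') > 0`. -/
theorem sandwich_bounds_and_nonneg_gap
    {G T K : Type*} [Fintype G] [Fintype T] [Fintype K] [DecidableEq K]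
    [Nonempty G] [Nonempty T] [Nonempty K]
    (c : T → K) (hc : Function.Surjective c)
    (Tk : K → Finset T) (hTk : ∀ k, Tk k = Finset.univ.filter fun t => c t = k)
    (Δ : ℝ) (hΔ : 0 < Δ)
    (Cinv Cop : G → ℝ) (Cns : ℝ)
    (F : G → T → ℝ) (D : T → ℝ) (Xlo Xhi : G → ℝ)
    -- an optimal solution of the aggregated model
    (xAs bAs : G → ℝ) (pAs : G → K → ℝ) (dAs : K → ℝ)
    (hAfeas : AggFeasible Δ F D Xlo Xhi Tk xAs bAs pAs dAs)
    (hAopt : ∀ (xA bA : G → ℝ) (pA : G → K → ℝ) (dA : K → ℝ),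
      AggFeasible Δ F D Xlo Xhi Tk xA bA pA dA →
        Jagg Δ Cinv Cop Cns Tk xAs pAs dAs ≤ Jagg Δ Cinv Cop Cns Tk xA pA dA)
    -- a feasible full-scale solution with the investment variables fixed to xAs, bAs
    (p' : G → T → ℝ) (dns' : T → ℝ)
    (hz' : FullFeasible Δ F D Xlo Xhi xAs bAs p' dns')
    -- an optimal solution of the full-scale model
    (xs bs : G → ℝ) (ps : G → T → ℝ) (dnss : T → ℝ)
    (hFfeas : FullFeasible Δ F D Xlo Xhi xs bs ps dnss)
    (hFopt : ∀ (x b : G → ℝ) (p : G → T → ℝ) (dns : T → ℝ),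
      FullFeasible Δ F D Xlo Xhi x b p dns →
        Jfull Δ Cinv Cop Cns xs ps dnss ≤ Jfull Δ Cinv Cop Cns x p dns) :
    Jagg Δ Cinv Cop Cns Tk xAs pAs dAs ≤ Jfull Δ Cinv Cop Cns xs ps dnss ∧
    Jfull Δ Cinv Cop Cns xs ps dnss ≤ Jfull Δ Cinv Cop Cns xAs p' dns' ∧
    (0 < Jfull Δ Cinv Cop Cns xAs p' dns' →
      0 ≤ (Jfull Δ Cinv Cop Cns xAs p' dns' - Jagg Δ Cinv Cop Cns Tk xAs pAs dAs) /
            Jfull Δ Cinv Cop Cns xAs p' dns') := by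
  -- cluster cardinalities are positive
  have hcard : ∀ k : K, 0 < ((Tk k).card : ℝ) := by
    intro k
    obtain ⟨t, ht⟩ := hc k
    have : t ∈ Tk k := by simp [hTk k, ht]
    exact_mod_cast Finset.card_pos.mpr ⟨t, this⟩
  -- partition lemma
  have hpart : ∀ f : T → ℝ, ∑ k, ∑ t ∈ Tk k, f t = ∑ t, f t := by
    intro f
    calc ∑ k, ∑ t ∈ Tk k, f t
        = ∑ k, ∑ t ∈ Finset.univ.filter (fun t => c t = k), f t := by
          simp_rw [hTk]
      _ = ∑ t, f t := Finset.sum_fiberwise _ _ _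
  obtain ⟨hF1, hF2, hF3⟩ := hFfeas
  -- build an aggregated-feasible solution from the full-scale optimum
  set pA : G → K → ℝ := fun g k => (∑ t ∈ Tk k, ps g t) / ((Tk k).card : ℝ) with hpA
  set dA : K → ℝ := fun k => (∑ t ∈ Tk k, dnss t) / ((Tk k).card : ℝ) with hdA
  have hfeasA : AggFeasible Δ F D Xlo Xhi Tk xs bs pA dA := by
    refine ⟨?_, ?_, hF3⟩
    · intro k
      have hc0 : ((Tk k).card : ℝ) ≠ 0 := ne_of_gt (hcard k)
      have : ∑ t ∈ Tk k, ((∑ g, ps g t) * Δ + dnss t) = ∑ t ∈ Tk k, D t := by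
        exact Finset.sum_congr rfl fun t _ => hF1 t
      have hswap : ∑ g, pA g k = (∑ t ∈ Tk k, ∑ g, ps g t) / ((Tk k).card : ℝ) := by
        simp only [hpA]
        rw [← Finset.sum_div, Finset.sum_comm]
      rw [hswap, hdA]
      field_simp
      rw [Finset.sum_mul, ← Finset.sum_add_distrib, this]
    · intro g k
      have hc0 : 0 < ((Tk k).card : ℝ) := hcard k
      constructor
      · exact div_nonneg (Finset.sum_nonneg fun t _ => (hF2 g t).1) hc0.le
      · rw [hpA, div_mul_eq_mul_div, div_le_div_iff₀ hc0 hc0]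
        have h1 : ∑ t ∈ Tk k, ps g t ≤ ∑ t ∈ Tk k, F g t * xs g :=
          Finset.sum_le_sum fun t _ => (hF2 g t).2
        have h2 : ∑ t ∈ Tk k, F g t * xs g = xs g * ∑ t ∈ Tk k, F g t := by
          rw [Finset.mul_sum]; exact Finset.sum_congr rfl fun t _ => mul_comm _ _
        nlinarith [hcard k]
  -- Jagg of the built solution equals Jfull of the optimum
  have hJeq : Jagg Δ Cinv Cop Cns Tk xs pA dA = Jfull Δ Cinv Cop Cns xs ps dnss := by
    unfold Jagg Jfull
    congr 1
    rw [← hpart (fun t => (∑ g, Cop g * ps g t) * Δ + Cns * dnss t)]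
    refine Finset.sum_congr rfl fun k _ => ?_
    have hc0 : ((Tk k).card : ℝ) ≠ 0 := ne_of_gt (hcard k)
    have h1 : ∑ g, Cop g * pA g k = (∑ t ∈ Tk k, ∑ g, Cop g * ps g t) / ((Tk k).card : ℝ) := by
      simp only [hpA]
      rw [eq_div_iff hc0, Finset.sum_comm, Finset.sum_mul]
      refine Finset.sum_congr rfl fun g _ => ?_
      rw [← Finset.mul_sum]
      field_simp
    rw [h1, hdA]
    rw [Finset.sum_add_distrib, ← Finset.sum_mul, ← Finset.mul_sum]
    field_simp
  have h1 : Jagg Δ Cinv Cop Cns Tk xAs pAs dAs ≤ Jfull Δ Cinv Cop Cns xs ps dnss := by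
    have := hAopt xs bs pA dA hfeasA
    linarith [this, hJeq.le, hJeq.ge]
  have h2 : Jfull Δ Cinv Cop Cns xs ps dnss ≤ Jfull Δ Cinv Cop Cns xAs p' dns' :=
    hFopt xAs bAs p' dns' hz'
  exact ⟨h1, h2, fun hpos => div_nonneg (by linarith) hpos.le⟩
end
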